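/- arXiv:2506.14253 — 3 statements merged into one kernel-verified Lean document; each statement's English description precedes it below -/
import Mathlib

section
/- Let G=(V,E) be a finite non-empty simple graph (E ≠ ∅), let φ: V → ℤ assign a positive integer to each vertex, let I be a φ-maximum independent set of G, and write U = V \ I = {u_1, …, u_p}. Suppose that for each k ∈ [1, p−1], the vertex u_k has at most φ(u_k) − 1 neighbors among {u_{k+1}, …, u_p} in the induced subgraph G[U]. Then the bipartite subgraph G[I, U] admits a (φ, U)-well subgraph. -/
open Finset

/-!
Give each vertex `z ∈ I` exactly `φ z` slots; the well subgraph is a matching of `U = V \ I`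
into the slots, so by Hall's theorem it suffices that every `S ⊆ U` sees at least `|S|` slots.
Scanning `S` in the order of `u` and keeping a vertex whenever it has no earlier kept neighbour
gives an independent `T ⊆ S`; each discarded vertex is a later neighbour of a kept one, so the
degree hypothesis yields `|S| ≤ φ(T)`. Replacing `N(T) ∩ I` by `T` inside `I` gives another
independent set, so maximality of `I` gives `φ(T) ≤ φ(N(T) ∩ I) ≤ φ(N(S) ∩ I)`.
-/

namespace Finset

theorem exists_card_fiber_le_of_forall_card_le_sum_biUnion {ι β : Type*} [Fintype ι]
    [DecidableEq β] (N : ι → Finset β) (c : β → ℕ)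
    (hN : ∀ T : Finset ι, #T ≤ ∑ z ∈ T.biUnion N, c z) :
    ∃ f : ι → β, (∀ i, f i ∈ N i) ∧ ∀ z, #{i | f i = z} ≤ c z := by
  set slots : ι → Finset (Σ _ : β, ℕ) := fun i => (N i).sigma fun z => range (c z)
  have hslots : ∀ T : Finset ι, T.biUnion slots = (T.biUnion N).sigma fun z => range (c z) :=
    fun T => by ext ⟨z, n⟩; simp [slots, ← and_assoc, exists_and_right]
  obtain ⟨g, hg, hgslots⟩ := (all_card_le_biUnion_card_iff_exists_injective slots).1 fun T => by
    simpa [hslots, card_sigma] using hN T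
  refine ⟨fun i => (g i).1, fun i => (mem_sigma.1 (hgslots i)).1, fun z => ?_⟩
  calc #{i | (g i).1 = z}
      ≤ #(range (c z)) := card_le_card_of_injOn (fun i => (g i).2) (fun i hi => by
          obtain rfl : (g i).1 = z := by simpa using hi
          simpa using (mem_sigma.1 (hgslots i)).2)
        (fun i hi j hj hij => hg (Sigma.ext (by simp_all) (heq_of_eq hij)))
    _ = c z := card_range _

end Finset

namespace SimpleGraph

variable {α V : Type*}

theorem isIndepSet_iff_forall_not_adj (G : SimpleGraph V) {s : Set V} :
    G.IsIndepSet s ↔ ∀ a ∈ s, ∀ b ∈ s, ¬G.Adj a b :=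
  ⟨fun h _ ha _ hb hab => h ha hb hab.ne hab, fun h a ha b hb _ => h a ha b hb⟩

theorem exists_isIndepSet_subset_forall_exists_lt_adj [LinearOrder α] (H : SimpleGraph α)
    (T : Finset α) :
    ∃ T' ⊆ T, H.IsIndepSet (T' : Set α) ∧ ∀ k ∈ T \ T', ∃ j ∈ T', j < k ∧ H.Adj j k := by
  induction T using Finset.induction_on_max with
  | empty => exact ⟨∅, subset_rfl, by simp, by simp⟩
  | insert a s has ih =>
    obtain ⟨T', hT's, hT', hdom⟩ := ih
    by_cases ha : ∃ j ∈ T', H.Adj j a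
    · refine ⟨T', hT's.trans (subset_insert a s), hT', fun k hk => ?_⟩
      obtain ⟨hks, hkT'⟩ := mem_sdiff.1 hk
      rcases mem_insert.1 hks with rfl | hks
      · obtain ⟨j, hj, hadj⟩ := ha
        exact ⟨j, hj, has j (hT's hj), hadj⟩
      · exact hdom k (mem_sdiff.2 ⟨hks, hkT'⟩)
    · push Not at ha
      refine ⟨insert a T', insert_subset_insert a hT's, ?_, fun k hk => ?_⟩
      · rw [coe_insert]
        exact hT'.insert fun b hb _ => ⟨fun h => ha b hb h.symm, ha b hb⟩
      · obtain ⟨hks, hkT'⟩ := mem_sdiff.1 hk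
        have hks : k ∈ s := (mem_insert.1 hks).resolve_left fun h => hkT' (h ▸ mem_insert_self a T')
        obtain ⟨j, hj, hjk, hadj⟩ := hdom k (mem_sdiff.2 ⟨hks, fun h => hkT' (mem_insert_of_mem h)⟩)
        exact ⟨j, mem_insert_of_mem hj, hjk, hadj⟩

theorem exists_isIndepSet_subset_card_le_sum [LinearOrder α] [Fintype α] (H : SimpleGraph α)
    [DecidableRel H.Adj] (w : α → ℤ) (hw : ∀ k, (#{j | k < j ∧ H.Adj k j} : ℤ) ≤ w k - 1)
    (T : Finset α) : ∃ T' ⊆ T, H.IsIndepSet (T' : Set α) ∧ (#T : ℤ) ≤ ∑ j ∈ T', w j := by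
  obtain ⟨T', hT'T, hT', hdom⟩ := H.exists_isIndepSet_subset_forall_exists_lt_adj T
  refine ⟨T', hT'T, hT', ?_⟩
  have hcover : T \ T' ⊆ T'.biUnion fun j => {k | j < k ∧ H.Adj j k} := fun k hk => by
    obtain ⟨j, hj, hjk, hadj⟩ := hdom k hk
    exact mem_biUnion.2 ⟨j, hj, by simp [hjk, hadj]⟩
  calc (#T : ℤ) = #(T \ T') + #T' := by rw [← card_sdiff_add_card_eq_card hT'T]; push_cast; rfl
    _ ≤ ∑ j ∈ T', (#{k | j < k ∧ H.Adj j k} : ℤ) + #T' := by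
      gcongr
      exact_mod_cast (card_le_card hcover).trans card_biUnion_le
    _ ≤ ∑ j ∈ T', (w j - 1) + #T' := by gcongr with j; exact hw j
    _ = ∑ j ∈ T', w j := by simp [sum_sub_distrib]

variable [DecidableEq V] (G : SimpleGraph V) [DecidableRel G.Adj] (φ : V → ℤ) {I : Finset V}

theorem sum_le_sum_biUnion_adj_of_forall_isIndepSet_sum_le (hI : G.IsIndepSet (I : Set V))
    (hmax : ∀ J : Finset V, G.IsIndepSet (J : Set V) → ∑ v ∈ J, φ v ≤ ∑ v ∈ I, φ v)
    {T : Finset V} (hT : G.IsIndepSet (T : Set V)) (hTI : Disjoint T I) :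
    ∑ v ∈ T, φ v ≤ ∑ z ∈ T.biUnion (fun v => I.filter (G.Adj v)), φ z := by
  set N := T.biUnion fun v => I.filter (G.Adj v)
  have hNI : N ⊆ I := biUnion_subset.2 fun _ _ => filter_subset _ _
  have hJ : G.IsIndepSet ((I \ N ∪ T : Finset V) : Set V) := by
    rw [isIndepSet_iff_forall_not_adj] at hI hT ⊢
    intro a ha b hb hab
    simp only [coe_union, coe_sdiff, Set.mem_union, Set.mem_sdiff, mem_coe] at ha hb
    have hN : ∀ {x y}, x ∈ T → y ∈ I → G.Adj x y → y ∈ N := fun hx hy hxy =>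
      mem_biUnion.2 ⟨_, hx, mem_filter.2 ⟨hy, hxy⟩⟩
    rcases ha with ⟨haI, haN⟩ | haT <;> rcases hb with ⟨hbI, hbN⟩ | hbT
    · exact hI a haI b hbI hab
    · exact haN (hN hbT haI hab.symm)
    · exact hbN (hN haT hbI hab)
    · exact hT a haT b hbT hab
  have hsum := hmax _ hJ
  rw [sum_union (hTI.symm.mono_left sdiff_subset), sum_sdiff_eq_sub hNI] at hsum
  linarith

theorem card_le_sum_biUnion_adj [LinearOrder α] [Fintype α] (hφ : ∀ v, 0 ≤ φ v)
    (hI : G.IsIndepSet (I : Set V))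
    (hmax : ∀ J : Finset V, G.IsIndepSet (J : Set V) → ∑ v ∈ J, φ v ≤ ∑ v ∈ I, φ v)
    {u : α → V} (hu : Function.Injective u) (huI : ∀ k, u k ∉ I)
    (hnb : ∀ k, (#{j | k < j ∧ G.Adj (u k) (u j)} : ℤ) ≤ φ (u k) - 1) (T : Finset α) :
    (#T : ℤ) ≤ ∑ z ∈ T.biUnion (fun k => I.filter (G.Adj (u k))), φ z := by
  obtain ⟨T', hT'T, hT', hcard⟩ := (G.comap u).exists_isIndepSet_subset_card_le_sum (φ ∘ u) hnb T
  have hindep : G.IsIndepSet ((T'.image u : Finset V) : Set V) := by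
    rw [coe_image, isIndepSet_iff, hu.injOn.pairwise_image]
    exact hT'
  have hdisj : Disjoint (T'.image u) I := Finset.disjoint_left.2 fun _ hv => by
    obtain ⟨k, -, rfl⟩ := mem_image.1 hv
    exact huI k
  calc (#T : ℤ) ≤ ∑ k ∈ T', φ (u k) := hcard
    _ = ∑ v ∈ T'.image u, φ v := (sum_image hu.injOn).symm
    _ ≤ ∑ z ∈ (T'.image u).biUnion (fun v => I.filter (G.Adj v)), φ z :=
      G.sum_le_sum_biUnion_adj_of_forall_isIndepSet_sum_le φ hI hmax hindep hdisj
    _ = ∑ z ∈ T'.biUnion (fun k => I.filter (G.Adj (u k))), φ z := by rw [image_biUnion]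
    _ ≤ ∑ z ∈ T.biUnion (fun k => I.filter (G.Adj (u k))), φ z :=
      sum_le_sum_of_subset_of_nonneg (biUnion_subset_biUnion_of_subset_left _ hT'T)
        fun z _ _ => hφ z

end SimpleGraph

/-- A `(φ, U)`-well subgraph (a `U`-star-covering in which every center `z ∈ I` has degree at
most `φ z`) is encoded by a function `f` matching each `u ∈ U` to a neighbor `f u ∈ I`,
each `z ∈ I` being used at most `φ z` times. -/
theorem exists_well_subgraph_general
    {V : Type*} [Fintype V] [DecidableEq V] (G : SimpleGraph V) [DecidableRel G.Adj]
    (φ : V → ℤ) (hφ : ∀ v : V, 0 < φ v)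
    (I : Finset V)
    (hindep : ∀ a ∈ I, ∀ b ∈ I, ¬ G.Adj a b)
    (hmax : ∀ J : Finset V, (∀ a ∈ J, ∀ b ∈ J, ¬ G.Adj a b) →
      ∑ v ∈ J, φ v ≤ ∑ v ∈ I, φ v)
    (p : ℕ) (hp : p = Iᶜ.card)
    (u : Fin p → V) (hu_inj : Function.Injective u) (hu_mem : ∀ k : Fin p, u k ∈ Iᶜ)
    (hnb : ∀ k : Fin p, (k : ℕ) < p - 1 →
      ((Finset.univ.filter fun j : Fin p => k < j ∧ G.Adj (u k) (u j)).card : ℤ)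
        ≤ φ (u k) - 1) :
    ∃ f : V → V,
      (∀ v ∈ Iᶜ, f v ∈ I ∧ G.Adj v (f v)) ∧
      (∀ z ∈ I, ((Iᶜ.filter fun v => f v = z).card : ℤ) ≤ φ z) := by
  have hφ_toNat : ∀ z, ((φ z).toNat : ℤ) = φ z := fun z => Int.toNat_of_nonneg (hφ z).le
  have hrange : univ.image u = Iᶜ := eq_of_subset_of_card_le
    (image_subset_iff.2 fun k _ => hu_mem k)
    (by rw [card_image_of_injective _ hu_inj, card_univ, Fintype.card_fin, hp])
  have hnb' : ∀ k : Fin p, (#{j | k < j ∧ G.Adj (u k) (u j)} : ℤ) ≤ φ (u k) - 1 := by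
    intro k
    by_cases hk : (k : ℕ) < p - 1
    · exact hnb k hk
    · rw [card_eq_zero.2 (filter_eq_empty_iff.2 fun j _ h => by omega), Nat.cast_zero]
      linarith [hφ (u k)]
  have hall := G.card_le_sum_biUnion_adj φ (fun v => (hφ v).le)
    ((G.isIndepSet_iff_forall_not_adj).2 hindep)
    (fun J hJ => hmax J ((G.isIndepSet_iff_forall_not_adj).1 hJ)) hu_inj
    (fun k => mem_compl.1 (hu_mem k)) hnb'
  obtain ⟨g, hgN, hgfib⟩ := exists_card_fiber_le_of_forall_card_le_sum_biUnion
    (fun k => I.filter (G.Adj (u k))) (fun z => (φ z).toNat) fun T => by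
      zify
      simpa only [hφ_toNat] using hall T
  refine ⟨Function.extend u g id, fun v hv => ?_, fun z _ => ?_⟩
  · obtain ⟨k, -, rfl⟩ := mem_image.1 (hrange ▸ hv)
    simpa [hu_inj.extend_apply] using hgN k
  · rw [← hrange, filter_image, card_image_of_injective _ hu_inj]
    simp only [hu_inj.extend_apply]
    rw [← hφ_toNat]
    exact_mod_cast hgfib z

/-- **Main lemma.** Let `G` be a finite non-empty simple graph, `φ` a positive-integer
vertex coloring, `I` a `φ`-maximum independent set (it maximizes `∑_{v ∈ I} φ v` among
independent sets and dominates its complement), and let `U = V \ I` be enumerated as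
`u 0, …, u (p-1)`. If each `u k` other than the last has at most `φ (u k) - 1` neighbors
among the later vertices `u j` (`j > k`) of `U`, then the bipartite graph `G[I, U]` has a
`(φ, U)`-well subgraph.

A `(φ, U)`-well subgraph (a `U`-star-covering in which every center `z ∈ I` has degree at
most `φ z`) is encoded by a function `f` matching each `u ∈ U` to a neighbor `f u ∈ I`,
each `z ∈ I` being used at most `φ z` times. -/
theorem exists_well_subgraph
    {V : Type*} [Fintype V] [DecidableEq V] (G : SimpleGraph V) [DecidableRel G.Adj]
    (hE : G.edgeSet.Nonempty)
    (φ : V → ℤ) (hφ : ∀ v : V, 0 < φ v)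
    (I : Finset V)
    (hindep : ∀ a ∈ I, ∀ b ∈ I, ¬ G.Adj a b)
    (hmax : ∀ J : Finset V, (∀ a ∈ J, ∀ b ∈ J, ¬ G.Adj a b) →
      ∑ v ∈ J, φ v ≤ ∑ v ∈ I, φ v)
    (hdom : ∀ v ∉ I, ∃ w ∈ I, G.Adj v w)
    (p : ℕ) (hp : p = Iᶜ.card)
    (u : Fin p → V) (hu_inj : Function.Injective u) (hu_mem : ∀ k : Fin p, u k ∈ Iᶜ)
    (hnb : ∀ k : Fin p, (k : ℕ) < p - 1 →
      ((Finset.univ.filter fun j : Fin p => k < j ∧ G.Adj (u k) (u j)).card : ℤ)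
        ≤ φ (u k) - 1) :
    ∃ f : V → V,
      (∀ v ∈ Iᶜ, f v ∈ I ∧ G.Adj v (f v)) ∧
      (∀ z ∈ I, ((Iᶜ.filter fun v => f v = z).card : ℤ) ≤ φ z) :=
  exists_well_subgraph_general G φ hφ I hindep hmax p hp u hu_inj hu_mem hnb
end

section
/- Let H be a finite simple graph with vertex set {u_1, …, u_p} (p ≥ 1) and let φ assign a positive integer to each vertex. Suppose that for each k ∈ [1, p], the vertex u_k has at most φ(u_k) − 1 neighbors among {u_j : j > k}. Then H contains an independent set Y with ∑_{y∈Y} φ(y) ≥ p. -/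
open Finset

namespace SimpleGraph

variable {V : Type*} [Fintype V] [LinearOrder V] (G : SimpleGraph V) [DecidableRel G.Adj]

def laterNeighborFinset (k : V) : Finset V :=
  univ.filter fun j => k < j ∧ G.Adj k j

lemma card_le_card_filter_not_adj_add_card_laterNeighborFinset {S : Finset V} {m : V}
    (hm : m ∈ S) (hmin : ∀ x ∈ S, m ≤ x) :
    #S ≤ #((S.erase m).filter (¬G.Adj m ·)) + #(G.laterNeighborFinset m) + 1 := by
  have hadj : (S.erase m).filter (G.Adj m ·) ⊆ G.laterNeighborFinset m := by
    intro x hx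
    obtain ⟨hxm, hxS⟩ := mem_erase.1 (mem_filter.1 hx).1
    simpa [laterNeighborFinset, (hmin x hxS).lt_of_ne' hxm] using (mem_filter.1 hx).2
  calc #S = #((S.erase m).filter (G.Adj m ·)) + #((S.erase m).filter (¬G.Adj m ·)) + 1 := by
        rw [card_filter_add_card_filter_not, card_erase_add_one hm]
    _ ≤ #((S.erase m).filter (¬G.Adj m ·)) + #(G.laterNeighborFinset m) + 1 := by
        have := card_le_card hadj
        omega

variable {G}

/-- The greedy construction: keep the least vertex `m` of `S`, discard its neighbours, recurse.
Keeping `m` gains weight `φ m`, which pays for `m` and its later neighbours. -/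
theorem exists_isIndepSet_subset_card_le_sum_s7 {φ : V → ℤ}
    (hφ : ∀ k, (#(G.laterNeighborFinset k) : ℤ) ≤ φ k - 1) (S : Finset V) :
    ∃ Y ⊆ S, G.IsIndepSet ↑Y ∧ (#S : ℤ) ≤ ∑ y ∈ Y, φ y := by
  induction S using Finset.strongInduction with
  | H S ih =>
  obtain rfl | hS := S.eq_empty_or_nonempty
  · exact ⟨∅, subset_refl _, by simp, by simp⟩
  set m := S.min' hS
  have hmS : m ∈ S := S.min'_mem hS
  set S' := (S.erase m).filter (¬G.Adj m ·)
  have hS'S : S' ⊆ S.erase m := filter_subset _ _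
  obtain ⟨Y, hYS', hY, hsum⟩ := ih S' (hS'S.trans_ssubset (erase_ssubset hmS))
  have hmY : m ∉ Y := fun h => by simpa using hS'S (hYS' h)
  refine ⟨insert m Y, insert_subset hmS (hYS'.trans (hS'S.trans (erase_subset _ _))), ?_, ?_⟩
  · rw [coe_insert, isIndepSet_iff, Set.pairwise_insert]
    refine ⟨hY, fun y hy _ => ?_⟩
    have hmy : ¬G.Adj m y := (mem_filter.1 (hYS' hy)).2
    exact ⟨hmy, fun hym => hmy hym.symm⟩
  · have hcard : (#S : ℤ) ≤ #S' + #(G.laterNeighborFinset m) + 1 := by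
      exact_mod_cast G.card_le_card_filter_not_adj_add_card_laterNeighborFinset hmS
        fun x hx => S.min'_le x hx
    rw [sum_insert hmY]
    linarith [hφ m]

end SimpleGraph

theorem exists_heavy_independent_set_general
    (p : ℕ) (H : SimpleGraph (Fin p)) [DecidableRel H.Adj]
    (φ : Fin p → ℤ)
    (hnb : ∀ k : Fin p,
      ((Finset.univ.filter fun j : Fin p => k < j ∧ H.Adj k j).card : ℤ) ≤ φ k - 1) :
    ∃ Y : Finset (Fin p),
      (∀ a ∈ Y, ∀ b ∈ Y, ¬ H.Adj a b) ∧ (p : ℤ) ≤ ∑ y ∈ Y, φ y := by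
  obtain ⟨Y, -, hY, hsum⟩ := H.exists_isIndepSet_subset_card_le_sum_s7 hnb univ
  refine ⟨Y, fun a ha b hb hab => hY ha hb hab.ne hab, ?_⟩
  simpa using hsum

/-- Let `H` be a finite simple graph on vertices `u_1, …, u_p` (here `Fin p`, `p ≥ 1`) and
`φ` a positive-integer weight on the vertices. If each vertex `k` has at most `φ k - 1`
neighbors among the later vertices `{j : j > k}`, then `H` contains an independent set `Y`
with `∑_{y ∈ Y} φ y ≥ p`. -/
theorem exists_heavy_independent_set
    (p : ℕ) (hp : 1 ≤ p) (H : SimpleGraph (Fin p)) [DecidableRel H.Adj]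
    (φ : Fin p → ℤ) (hφ : ∀ k : Fin p, 0 < φ k)
    (hnb : ∀ k : Fin p,
      ((Finset.univ.filter fun j : Fin p => k < j ∧ H.Adj k j).card : ℤ) ≤ φ k - 1) :
    ∃ Y : Finset (Fin p),
      (∀ a ∈ Y, ∀ b ∈ Y, ¬ H.Adj a b) ∧ (p : ℤ) ≤ ∑ y ∈ Y, φ y :=
  exists_heavy_independent_set_general p H φ hnb
end

section
/- Let G be a finite simple bipartite graph with parts I and U ∪ {u₁}, where u₁ ∉ U, and let φ assign a positive integer to each vertex of I. Let F be a (φ, U)-well subgraph of G[I, U]. Suppose there exist vertices x_1, …, x_t ∈ I and y_1, …, y_t ∈ U (t ≥ 1, all distinct) such that u₁x_1 ∈ E(G), x_j y_j ∈ E(F) for each j ∈ [1, t], y_j x_{j+1} ∈ E(G) for each j ∈ [1, t−1], and for some i ∈ [1, t] the vertex x_i satisfies d_F(x_i) < φ(x_i). Then G[I, U ∪ {u₁}] admits a (φ, U ∪ {u₁})-well subgraph; indeed, the subgraph induced by the edge set (E(F) \ {x_j y_j : j ∈ [1, i−1]}) ∪ {y_j x_{j+1} : j ∈ [1, i−1]}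 ∪ {u₁ x_1} is such a subgraph. -/
open Finset

/-- **Augmentation along an alternating path.** Let `G` be a finite simple bipartite graph
with parts `I` and `U ∪ {u₁}` (with `u₁ ∉ U`), and let `φ` assign a positive integer to
each vertex of `I`. A `(φ, U)`-well subgraph `F` of `G[I, U]` (a `U`-star-covering whose
centers lie in `I`, each center `z` having degree at most `φ z`) is encoded by a function
`f` matching each `v ∈ U` to a neighbor `f v ∈ I`.

Suppose there is a `(u₁, F)`-alternating path `u₁ x₀ y₀ x₁ y₁ … x_{t-1} y_{t-1}`
(all vertices distinct, `x_j ∈ I`, `y_j ∈ U`, `u₁x₀ ∈ E(G)`, `x_j y_j ∈ E(F)`, i.e.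
`f (y j) = x j`, and `y_j x_{j+1} ∈ E(G)`) such that some `x i` is not tight:
`d_F(x i) < φ (x i)`. Then `G[I, U ∪ {u₁}]` admits a `(φ, U ∪ {u₁})`-well subgraph;
indeed, the subgraph obtained from `F` by replacing the edges `x_j y_j` (`j < i`) by
`y_j x_{j+1}` (`j < i`) and adding `u₁ x₀` is such a subgraph. -/
theorem well_subgraph_augmentation
    {V : Type*} [Fintype V] [DecidableEq V] (G : SimpleGraph V) [DecidableRel G.Adj]
    (I U : Finset V) (u₁ : V) (hu₁U : u₁ ∉ U)
    (hdisj : Disjoint I (insert u₁ U))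
    (hcover : ∀ v : V, v ∈ I ∪ insert u₁ U)
    (hbip : ∀ a b : V, G.Adj a b →
      (a ∈ I ∧ b ∈ insert u₁ U) ∨ (b ∈ I ∧ a ∈ insert u₁ U))
    (φ : V → ℤ) (hφ : ∀ z ∈ I, 0 < φ z)
    (f : V → V)
    (hf : ∀ v ∈ U, f v ∈ I ∧ G.Adj v (f v))
    (hfdeg : ∀ z ∈ I, ((U.filter fun v => f v = z).card : ℤ) ≤ φ z)
    (t : ℕ) (ht : 1 ≤ t) (x y : Fin t → V)
    (hxI : ∀ j : Fin t, x j ∈ I) (hyU : ∀ j : Fin t, y j ∈ U)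
    (hx_inj : Function.Injective x) (hy_inj : Function.Injective y)
    (hu₁x : G.Adj u₁ (x ⟨0, ht⟩))
    (hxy : ∀ j : Fin t, f (y j) = x j)
    (hchain : ∀ (j : Fin t) (h : (j : ℕ) + 1 < t), G.Adj (y j) (x ⟨(j : ℕ) + 1, h⟩))
    (i : Fin t)
    (hslack : ((U.filter fun v => f v = x i).card : ℤ) < φ (x i)) :
    ∃ g : V → V,
      g u₁ = x ⟨0, ht⟩ ∧
      (∀ (j : Fin t) (h : (j : ℕ) < (i : ℕ)),
        g (y j) = x ⟨(j : ℕ) + 1, lt_of_le_of_lt (Nat.succ_le_of_lt h) i.isLt⟩) ∧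
      (∀ v ∈ U, (∀ j : Fin t, (j : ℕ) < (i : ℕ) → v ≠ y j) → g v = f v) ∧
      (∀ v ∈ insert u₁ U, g v ∈ I ∧ G.Adj v (g v)) ∧
      (∀ z ∈ I, (((insert u₁ U).filter fun v => g v = z).card : ℤ) ≤ φ z) := by
  classical
  -- the rerouted matching
  let g : V → V := fun v =>
    if v = u₁ then x ⟨0, ht⟩
    else if h : ∃ j : Fin t, (j : ℕ) < (i : ℕ) ∧ v = y j then
      x ⟨(h.choose : ℕ) + 1, Nat.lt_of_le_of_lt (Nat.succ_le_of_lt h.choose_spec.1) i.isLt⟩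
    else f v
  -- the shift map on U ∪ {u₁}
  let π : V → V := fun v =>
    if v = u₁ then y ⟨0, ht⟩
    else if h : ∃ j : Fin t, (j : ℕ) < (i : ℕ) ∧ v = y j then
      y ⟨(h.choose : ℕ) + 1, Nat.lt_of_le_of_lt (Nat.succ_le_of_lt h.choose_spec.1) i.isLt⟩
    else v
  have hyne : ∀ j : Fin t, y j ≠ u₁ := fun j h => hu₁U (h ▸ hyU j)
  have hg0 : g u₁ = x ⟨0, ht⟩ := by simp only [g, if_pos rfl]
  have hg1 : ∀ (j : Fin t) (h : (j : ℕ) < (i : ℕ)),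
      g (y j) = x ⟨(j : ℕ) + 1, Nat.lt_of_le_of_lt (Nat.succ_le_of_lt h) i.isLt⟩ := by
    intro j hj
    have hex : ∃ k : Fin t, (k : ℕ) < (i : ℕ) ∧ y j = y k := ⟨j, hj, rfl⟩
    have hch : hex.choose = j := (hy_inj hex.choose_spec.2).symm
    simp only [g, if_neg (hyne j), dif_pos hex]
    congr 1
    exact Fin.ext (by simp [hch])
  have hg2 : ∀ v ∈ U, (∀ j : Fin t, (j : ℕ) < (i : ℕ) → v ≠ y j) → g v = f v := by
    intro v hv hvy
    have hne : v ≠ u₁ := fun h => hu₁U (h ▸ hv)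
    have hnex : ¬∃ j : Fin t, (j : ℕ) < (i : ℕ) ∧ v = y j := by
      rintro ⟨j, hj, rfl⟩; exact hvy j hj rfl
    simp only [g, if_neg hne, dif_neg hnex]
  -- trichotomy for elements of insert u₁ U
  have hcases : ∀ v ∈ insert u₁ U,
      (v = u₁ ∧ π v = y ⟨0, ht⟩ ∧ g v = x ⟨0, ht⟩) ∨
      (∃ (j : Fin t) (hj : (j : ℕ) + 1 < t), (j : ℕ) < (i : ℕ) ∧ v = y j ∧
        π v = y ⟨(j : ℕ) + 1, hj⟩ ∧ g v = x ⟨(j : ℕ) + 1, hj⟩) ∨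
      (v ∈ U ∧ (∀ j : Fin t, (j : ℕ) < (i : ℕ) → v ≠ y j) ∧ π v = v ∧ g v = f v) := by
    intro v hv
    by_cases hne : v = u₁
    · refine Or.inl ⟨hne, ?_, ?_⟩ <;> simp only [π, g, if_pos hne]
    · have hvU : v ∈ U := by
        rcases Finset.mem_insert.mp hv with h | h
        · exact absurd h hne
        · exact h
      by_cases hex : ∃ j : Fin t, (j : ℕ) < (i : ℕ) ∧ v = y j
      · refine Or.inr (Or.inl ⟨hex.choose,
          Nat.lt_of_le_of_lt (Nat.succ_le_of_lt hex.choose_spec.1) i.isLt,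
          hex.choose_spec.1, hex.choose_spec.2, ?_, ?_⟩) <;>
          simp only [π, g, if_neg hne, dif_pos hex]
      · refine Or.inr (Or.inr ⟨hvU, ?_, ?_, ?_⟩)
        · rintro j hj rfl; exact hex ⟨j, hj, rfl⟩
        · simp only [π, if_neg hne, dif_neg hex]
        · simp only [g, if_neg hne, dif_neg hex]
  refine ⟨g, hg0, hg1, hg2, ?_, ?_⟩
  · -- edges
    intro v hv
    rcases hcases v hv with ⟨rfl, _, hgv⟩ | ⟨j, hj, hji, rfl, _, hgv⟩ | ⟨hvU, _, _, hgv⟩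
    · rw [hgv]; exact ⟨hxI _, hu₁x⟩
    · rw [hgv]; exact ⟨hxI _, hchain j hj⟩
    · rw [hgv]; exact hf v hvU
  · -- degrees
    intro z hz
    by_cases hzx : z = x i
    · subst hzx
      -- extra slack vertex
      set S := U.filter fun v => f v = x i with hS
      have hsub : ∀ w : V,
          (((i : ℕ) = 0 → w = u₁) ∧ ∀ (j : Fin t), (j : ℕ) + 1 = (i : ℕ) → w = y j) →
          (insert u₁ U).filter (fun v => g v = x i) ⊆ insert w S := by
        intro w ⟨hw0, hwj⟩ v hv
        rw [Finset.mem_filter] at hv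
        obtain ⟨hv1, hv2⟩ := hv
        rcases hcases v hv1 with ⟨rfl, _, hgv⟩ | ⟨j, hj, hji, rfl, _, hgv⟩ |
            ⟨hvU, _, _, hgv⟩
        · rw [hgv] at hv2
          have : (i : ℕ) = 0 := by
            have := hx_inj hv2.symm
            simpa [Fin.ext_iff] using this
          exact Finset.mem_insert.mpr (Or.inl (hw0 this).symm)
        · rw [hgv] at hv2
          have : (j : ℕ) + 1 = (i : ℕ) := by
            have := hx_inj hv2
            simpa [Fin.ext_iff] using this
          exact Finset.mem_insert.mpr (Or.inl (hwj j this).symm)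
        · rw [hgv] at hv2
          exact Finset.mem_insert.mpr (Or.inr (Finset.mem_filter.mpr ⟨hvU, hv2⟩))
      have hcard : ((insert u₁ U).filter (fun v => g v = x i)).card ≤ S.card + 1 := by
        by_cases hi0 : (i : ℕ) = 0
        · refine le_trans (Finset.card_le_card (hsub u₁ ⟨fun _ => rfl, ?_⟩)) ?_
          · intro j hj; exfalso; omega
          · exact le_trans (Finset.card_insert_le _ _) (by omega)
        · have hipred : (i : ℕ) - 1 < t := lt_of_le_of_lt (Nat.sub_le _ _) i.isLt
          refine le_trans (Finset.card_le_card (hsub (y ⟨(i : ℕ) - 1, hipred⟩)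
            ⟨fun h => absurd h hi0, ?_⟩)) ?_
          · intro j hj
            congr 1
            exact Fin.ext (show (i : ℕ) - 1 = (j : ℕ) by omega)
          · exact le_trans (Finset.card_insert_le _ _) (by omega)
      calc (((insert u₁ U).filter (fun v => g v = x i)).card : ℤ)
            ≤ (S.card : ℤ) + 1 := by exact_mod_cast hcard
          _ ≤ φ (x i) := by omega
    · -- π injects the fiber of z into the old fiber
      have hmap : ∀ v ∈ (insert u₁ U).filter (fun v => g v = z),
          π v ∈ U.filter fun w => f w = z := by
        intro v hv
        rw [Finset.mem_filter] at hv
        obtain ⟨hv1, hv2⟩ := hv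
        rcases hcases v hv1 with ⟨rfl, hπv, hgv⟩ | ⟨j, hj, hji, rfl, hπv, hgv⟩ |
            ⟨hvU, _, hπv, hgv⟩
        · rw [hπv]
          exact Finset.mem_filter.mpr ⟨hyU _, by rw [hxy]; rw [hgv] at hv2; exact hv2⟩
        · rw [hπv]
          exact Finset.mem_filter.mpr ⟨hyU _, by rw [hxy]; rw [hgv] at hv2; exact hv2⟩
        · rw [hπv]
          exact Finset.mem_filter.mpr ⟨hvU, by rw [hgv] at hv2; exact hv2⟩
      have hinj : Set.InjOn π ((insert u₁ U).filter (fun v => g v = z)) := by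
        intro a ha b hb hab
        rw [Finset.coe_filter, Set.mem_setOf_eq] at ha hb
        obtain ⟨ha1, ha2⟩ := ha
        obtain ⟨hb1, hb2⟩ := hb
        -- helper: a vertex in the "fixed" case equal to some y k with k ≤ i leads to f value x k
        rcases hcases a ha1 with ⟨rfl, hπa, hga⟩ | ⟨j, hj, hji, rfl, hπa, hga⟩ |
            ⟨haU, hay, hπa, hga⟩ <;>
          rcases hcases b hb1 with ⟨rfl, hπb, hgb⟩ | ⟨k, hk, hki, rfl, hπb, hgb⟩ |
            ⟨hbU, hby, hπb, hgb⟩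
        · rfl
        · rw [hπa, hπb] at hab
          have := hy_inj hab
          simp [Fin.ext_iff] at this
        · -- b fixed, π b = b = y 0; then 0 ≥ i (b not rerouted), f b = x 0 and z = x 0
          rw [hπa, hπb] at hab
          have hb0 : b = y ⟨0, ht⟩ := hab.symm
          have h0i : ¬ ((0 : ℕ) < (i : ℕ)) := fun h => hby ⟨0, ht⟩ (by simpa using h) hb0
          have hiz : (i : ℕ) = 0 := by omega
          have : z = x i := by
            rw [← ha2, hga]
            congr 1
            exact Fin.ext (by simp [hiz])
          exact absurd this hzx
        · rw [hπa, hπb] at hab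
          have := hy_inj hab
          simp [Fin.ext_iff] at this
        · rw [hπa, hπb] at hab
          have := hy_inj hab
          simp only [Fin.ext_iff] at this
          congr 1
          exact Fin.ext (by omega)
        · rw [hπa, hπb] at hab
          have hbj : b = y ⟨(j : ℕ) + 1, hj⟩ := hab.symm
          have hji2 : ¬ ((j : ℕ) + 1 < (i : ℕ)) :=
            fun h => hby ⟨(j : ℕ) + 1, hj⟩ (by simpa using h) hbj
          have hieq : (j : ℕ) + 1 = (i : ℕ) := by omega
          have : z = x i := by
            rw [← hb2, hgb, hbj, hxy]
            congr 1
            exact Fin.ext (by simp [hieq])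
          exact absurd this hzx
        · -- symmetric of case (1,3)
          rw [hπa, hπb] at hab
          have ha0 : a = y ⟨0, ht⟩ := hab
          have h0i : ¬ ((0 : ℕ) < (i : ℕ)) := fun h => hay ⟨0, ht⟩ (by simpa using h) ha0
          have hiz : (i : ℕ) = 0 := by omega
          have : z = x i := by
            rw [← hb2, hgb]
            congr 1
            exact Fin.ext (by simp [hiz])
          exact absurd this hzx
        · rw [hπa, hπb] at hab
          have haj : a = y ⟨(k : ℕ) + 1, hk⟩ := hab
          have hki2 : ¬ ((k : ℕ) + 1 < (i : ℕ)) :=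
            fun h => hay ⟨(k : ℕ) + 1, hk⟩ (by simpa using h) haj
          have hieq : (k : ℕ) + 1 = (i : ℕ) := by omega
          have : z = x i := by
            rw [← ha2, hga, haj, hxy]
            congr 1
            exact Fin.ext (by simp [hieq])
          exact absurd this hzx
        · rw [hπa, hπb] at hab
          exact hab
      have := Finset.card_le_card_of_injOn π hmap hinj
      calc (((insert u₁ U).filter (fun v => g v = z)).card : ℤ)
          ≤ ((U.filter fun w => f w = z).card : ℤ) := by exact_mod_cast this
        _ ≤ φ z := hfdeg z hz
end
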